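/- arXiv:1507.08426 — 3 statements merged into one kernel-verified Lean document; each statement's English description precedes it below -/
import Mathlib

section
/- The counting predicate ♯e ≥ n is correct: for n ≥ 1, a state (I_s, I_h) satisfies (e ≠ 0) ∧ ((∃y: y ↦ e) * ... * (∃y: y ↦ e) * true) with n copies of (∃y: y ↦ e) if and only if [e] ≠ 0 and the set { l ∈ dom(I_h) | I_h(l) = [e] } has cardinality at least n. -/
abbrev Val := ℕ
abbrev Stack := ℕ → Val
abbrev Heap := ℕ → Option Val

def Heap.dom (h : Heap) : Set ℕ := {l | h l ≠ none}

def Heap.Disj (h1 h2 : Heap) : Prop := ∀ l, h1 l = none ∨ h2 l = none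

def Heap.union (h1 h2 : Heap) : Heap := fun l => (h1 l).orElse (fun _ => h2 l)

def Heap.emptyH : Heap := fun _ => none

inductive Term
  | const : ℕ → Term
  | var : ℕ → Term

def Term.fv : Term → Set ℕ
  | .const _ => ∅
  | .var x => {x}

def evalT (s : Stack) : Term → Val
  | .const n => n
  | .var x => s x

inductive SL
  | eq : Term → Term → SL
  | pto : Term → Term → SL
  | not : SL → SL
  | or : SL → SL → SL
  | sep : SL → SL → SL
  | ex : ℕ → SL → SL

def sat (s : Stack) (h : Heap) : SL → Prop
  | .eq e1 e2 => evalT s e1 = evalT s e2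
  | .pto e1 e2 => Heap.dom h = {evalT s e1} ∧ h (evalT s e1) = some (evalT s e2)
  | .not φ => ¬ sat s h φ
  | .or φ1 φ2 => sat s h φ1 ∨ sat s h φ2
  | .sep φ1 φ2 => ∃ h1 h2, Heap.Disj h1 h2 ∧ Heap.union h1 h2 = h ∧ sat s h1 φ1 ∧ sat s h2 φ2
  | .ex x φ => ∃ v : Val, sat (Function.update s x v) h φ

def SL.tt : SL := .eq (.const 0) (.const 0)
def SL.ff : SL := .not SL.tt
def SL.and (a b : SL) : SL := .not (.or (.not a) (.not b))
def SL.neq (e1 e2 : Term) : SL := .not (.eq e1 e2)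

/-- ∃y : y ↦ e -/
def predF (e : Term) (y : ℕ) : SL := .ex y (.pto (.var y) e)

/-- n separated copies of ψ, followed by * base. -/
def iterSep : ℕ → SL → SL → SL
  | 0, _, base => base
  | n+1, ψ, base => .sep ψ (iterSep n ψ base)

/-- ♯e ≥ n ≝ e ≠ 0 ∧ (∃y:y↦e) * ⋯ * (∃y:y↦e) * true (n copies). -/
def geF (e : Term) (y : ℕ) (n : ℕ) : SL :=
  SL.and (SL.neq e (.const 0)) (iterSep n (predF e y) SL.tt)

lemma evalT_update (s : Stack) (e : Term) (y : ℕ) (hy : y ∉ Term.fv e) (w : Val) :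
    evalT (Function.update s y w) e = evalT s e := by
  cases e with
  | const n => rfl
  | var x =>
    simp [Term.fv] at hy
    simp [evalT, Function.update, Ne.symm hy]

lemma iter_aux (s : Stack) (e : Term) (y : ℕ) (hy : y ∉ Term.fv e) :
    ∀ (n : ℕ) (h : Heap), (Heap.dom h).Finite →
      (sat s h (iterSep n (predF e y) SL.tt) ↔
        n ≤ ({l | h l = some (evalT s e)}).ncard) := by
  intro n
  induction n with
  | zero => intro h hfin; simp [iterSep, SL.tt, sat, evalT]
  | succ n ih =>
    intro h hfin
    have hsub : {l | h l = some (evalT s e)} ⊆ Heap.dom h := by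
      intro l hl; simp [Heap.dom]; simp at hl; simp [hl]
    have hpfin : ({l | h l = some (evalT s e)}).Finite := hfin.subset hsub
    constructor
    · rintro ⟨h1, h2, hdisj, hun, hs1, hs2⟩
      obtain ⟨w, hdom, hval⟩ := hs1
      rw [evalT_update s e y hy] at hval
      have hw : evalT (Function.update s y w) (Term.var y) = w := by
        simp [evalT]
      rw [hw] at hdom hval
      set l0 := w with hl0
      have h2dom : Heap.dom h2 ⊆ Heap.dom h := by
        intro l hl
        simp [Heap.dom] at hl ⊢
        rw [← hun]
        cases hh : h1 l with
        | none => simpa [Heap.union, hh, Option.orElse] using hl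
        | some v => simp [Heap.union, hh, Option.orElse]
      have hs2' := (ih h2 (hfin.subset h2dom)).1 hs2
      have h2l0 : h2 l0 = none := by
        rcases hdisj l0 with h' | h'
        · rw [h'] at hval; exact absurd hval (by simp)
        · exact h'
      have hins : insert l0 {l | h2 l = some (evalT s e)} ⊆
          {l | h l = some (evalT s e)} := by
        intro l hl
        rcases hl with rfl | hl
        · simp; rw [← hun]; simp [Heap.union, show h1 l = some (evalT s e) from hval, Option.orElse]
        · simp at hl ⊢
          rw [← hun]; simp [Heap.union]
          have h1l : h1 l = none := by
            by_contra hc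
            have : l ∈ Heap.dom h1 := hc
            rw [hdom] at this
            simp at this
            rw [this, h2l0] at hl; exact absurd hl (by simp)
          simp [h1l, Option.orElse, hl]
      have hnotin : l0 ∉ {l | h2 l = some (evalT s e)} := by
        simp [h2l0]
      have hcard : (insert l0 {l | h2 l = some (evalT s e)}).ncard =
          {l | h2 l = some (evalT s e)}.ncard + 1 :=
        Set.ncard_insert_of_notMem hnotin
          (hpfin.subset (fun l hl => hins (Set.mem_insert_of_mem _ hl)))
      have hle2 := Set.ncard_le_ncard hins hpfin
      omega
    · intro hle
      have hne : ({l | h l = some (evalT s e)}).Nonempty := by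
        rw [Set.nonempty_iff_ne_empty]
        intro hemp
        rw [hemp] at hle; simp at hle
      obtain ⟨l0, hl0⟩ := hne
      simp only [Set.mem_setOf_eq] at hl0
      refine ⟨fun l' => if l' = l0 then some (evalT s e) else none,
        Function.update h l0 none, ?_, ?_, ?_, ?_⟩
      · intro l
        by_cases hc : l = l0
        · right; simp [hc, Function.update]
        · left; simp [hc]
      · funext l
        by_cases hc : l = l0
        · simp only [Heap.union, hc, if_pos rfl, Option.orElse]
          exact hl0.symm
        · simp [Heap.union, hc, Option.orElse, Function.update, hc]
      · refine ⟨l0, ?_, ?_⟩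
        · ext l
          simp [Heap.dom, evalT, Function.update]
        · rw [evalT_update s e y hy]
          simp [evalT, Function.update]
      · apply (ih _ ?_).2
        · have heq : {l | Function.update h l0 none l = some (evalT s e)} =
              {l | h l = some (evalT s e)} \ {l0} := by
            ext l
            by_cases hc : l = l0 <;> simp [Function.update, hc]
          have hmem : l0 ∈ {l | h l = some (evalT s e)} := hl0
          rw [heq, Set.ncard_diff_singleton_of_mem hmem]
          omega
        · apply hfin.subset
          intro l hl
          simp [Heap.dom, Function.update] at hl ⊢
          rcases hl with ⟨_, hl⟩; exact hl

/-- ♯e ≥ n holds iff [e] ≠ 0 and e has at least n predecessors. -/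
theorem stmt_6 (s : Stack) (h : Heap) (e : Term) (y : ℕ) (n : ℕ)
    (hn : 1 ≤ n) (hy : y ∉ Term.fv e) (hfin : (Heap.dom h).Finite) :
    sat s h (geF e y n) ↔
      (evalT s e ≠ 0 ∧ n ≤ ({l | h l = some (evalT s e)}).ncard) := by
  have h0 : evalT s (Term.const 0) = 0 := rfl
  simp only [geF, SL.and, SL.neq, sat, h0]
  rw [iter_aux s e y hy n h hfin]
  tauto
end

section
/- The translation f of separation logic state formulas into heap-free formulas is correct on points-to: for any stack I_s, heap I_h ∈ I_h[n], variable vector C of n pairs with fv(e1↦e2) ∩ fv(C) = ∅, and value vector c with vh_n(c) = I_h, we have I_s,I_h ⊨ e1 ↦ e2 if and only if I_s ∪ [C⇐c], ∅ ⊨ ⋁_{i=1..n} (C_{i,1} ≠ 0 ∧ ⋀_{j≠i} C_{j,1} = 0 ∧ C_{i,1} = e1 ∧ C_{i,2} = e2). -/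
/-- A vector of pairs represents a valid heap iff no nonzero first component repeats. -/
def vhDefined {n : ℕ} (c : Fin n → Val × Val) : Prop :=
  ∀ i j, i ≠ j → (c i).1 = (c j).1 → (c i).1 = 0

/-- The heap represented by a vector of n value pairs:
    { (c_{i,1}, c_{i,2}) | c_{i,1} ≠ 0 }. -/
noncomputable def vh {n : ℕ} (c : Fin n → Val × Val) : Heap := fun l =>
  if hl : l ≠ 0 ∧ ∃ i, (c i).1 = l then some (c hl.2.choose).2 else none

def bigOr (l : List SL) : SL := l.foldr .or SL.ff
def bigAnd (l : List SL) : SL := l.foldr SL.and SL.tt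

/-- f(e1 ↦ e2, C) = ⋁_i (C_{i,1} ≠ 0 ∧ ⋀_{j≠i} C_{j,1} = 0 ∧ C_{i,1} = e1 ∧ C_{i,2} = e2). -/
def ptoTrans {n : ℕ} (C : Fin n → ℕ × ℕ) (e1 e2 : Term) : SL :=
  bigOr ((List.finRange n).map fun i =>
    SL.and (SL.neq (.var (C i).1) (.const 0))
      (SL.and
        (bigAnd (((List.finRange n).filter (fun j => j ≠ i)).map
          fun j => .eq (.var (C j).1) (.const 0)))
        (SL.and (.eq (.var (C i).1) e1) (.eq (.var (C i).2) e2))))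

lemma sat_tt (s : Stack) (h : Heap) : sat s h SL.tt := by simp [SL.tt, sat, evalT]

lemma sat_ff (s : Stack) (h : Heap) : ¬ sat s h SL.ff := by
  simp [SL.ff, sat, SL.tt, evalT]

lemma sat_and (s : Stack) (h : Heap) (a b : SL) :
    sat s h (SL.and a b) ↔ sat s h a ∧ sat s h b := by
  simp only [SL.and, sat]; tauto

lemma sat_bigOr (s : Stack) (h : Heap) (l : List SL) :
    sat s h (bigOr l) ↔ ∃ φ ∈ l, sat s h φ := by
  induction l with
  | nil => simp [bigOr]; exact sat_ff s h
  | cons a l ih => simp [bigOr, sat] at ih ⊢; rw [ih]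

lemma sat_bigAnd (s : Stack) (h : Heap) (l : List SL) :
    sat s h (bigAnd l) ↔ ∀ φ ∈ l, sat s h φ := by
  induction l with
  | nil => simp [bigAnd]; exact sat_tt s h
  | cons a l ih => simp only [bigAnd, List.foldr] at ih ⊢; rw [sat_and, ih]; simp

lemma vh_eq {n : ℕ} (c : Fin n → Val × Val) (hdef : vhDefined c) (i : Fin n)
    (hi : (c i).1 ≠ 0) : vh c ((c i).1) = some (c i).2 := by
  have hl : (c i).1 ≠ 0 ∧ ∃ j, (c j).1 = (c i).1 := ⟨hi, i, rfl⟩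
  rw [vh, dif_pos hl]
  have hk := hl.2.choose_spec
  by_cases hki : hl.2.choose = i
  · rw [hki]
  · exact absurd (hdef _ _ hki hk) (hk.symm ▸ hi)

/-- correctness of the translation f on points-to formulas.
    C is a vector of fresh variables, c a value vector with vh_n(c) = I_h, and
    s' = I_s ∪ [C⇐c] is the extended stack; the target is evaluated on the empty heap. -/
theorem stmt_12 (n : ℕ) (e1 e2 : Term) (s s' : Stack)
    (C : Fin n → ℕ × ℕ) (c : Fin n → Val × Val) (hdef : vhDefined c)
    (hfresh : ∀ i, (C i).1 ∉ Term.fv e1 ∪ Term.fv e2 ∧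
                   (C i).2 ∉ Term.fv e1 ∪ Term.fv e2)
    (hagree : ∀ i, s' (C i).1 = (c i).1 ∧ s' (C i).2 = (c i).2)
    (houtside : ∀ x, (∀ i, x ≠ (C i).1 ∧ x ≠ (C i).2) → s' x = s x) :
    sat s (vh c) (.pto e1 e2) ↔ sat s' Heap.emptyH (ptoTrans C e1 e2) := by
  have ha1 : ∀ i, s' (C i).1 = (c i).1 := fun i => (hagree i).1
  have ha2 : ∀ i, s' (C i).2 = (c i).2 := fun i => (hagree i).2
  have hv : ∀ x, x ∈ Term.fv e1 ∪ Term.fv e2 → s' x = s x := fun x hx =>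
    houtside x (fun i => ⟨fun h => (hfresh i).1 (h ▸ hx), fun h => (hfresh i).2 (h ▸ hx)⟩)
  have he1 : evalT s' e1 = evalT s e1 := by
    cases e1 with
    | const k => rfl
    | var x => exact hv x (Set.mem_union_left _ rfl)
  have he2 : evalT s' e2 = evalT s e2 := by
    cases e2 with
    | const k => rfl
    | var x => exact hv x (Set.mem_union_right _ rfl)
  have hdom : ∀ l, l ∈ Heap.dom (vh c) ↔ l ≠ 0 ∧ ∃ i, (c i).1 = l := by
    intro l
    simp only [Heap.dom, vh, Set.mem_setOf_eq]
    by_cases hl : l ≠ 0 ∧ ∃ i, (c i).1 = l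
    · simp [hl]
    · simp [hl]
  have hR : sat s' Heap.emptyH (ptoTrans C e1 e2) ↔
      ∃ i, (c i).1 ≠ 0 ∧ (∀ j, j ≠ i → (c j).1 = 0) ∧
        (c i).1 = evalT s e1 ∧ (c i).2 = evalT s e2 := by
    have hvar : ∀ (t : Stack) x, evalT t (.var x) = t x := fun _ _ => rfl
    rw [ptoTrans, sat_bigOr]
    simp only [List.mem_map, List.mem_finRange, List.mem_filter, true_and,
      exists_exists_eq_and, sat_and, sat_bigAnd, decide_eq_true_eq,
      forall_exists_index]
    have hne : ∀ (v : ℕ), sat s' Heap.emptyH (SL.neq (.var v) (.const 0))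
        ↔ s' v ≠ 0 := fun _ => Iff.rfl
    have heq0 : ∀ (v : ℕ), sat s' Heap.emptyH (SL.eq (.var v) (.const 0))
        ↔ s' v = 0 := fun _ => Iff.rfl
    have heq : ∀ (v : ℕ) (e : Term), sat s' Heap.emptyH (SL.eq (.var v) e)
        ↔ s' v = evalT s' e := fun _ _ => Iff.rfl
    simp only [hne, heq, ha1, ha2, he1, he2]
    constructor
    · rintro ⟨i, h0, hz, h1, h2⟩
      refine ⟨i, h0, fun j hj => ?_, h1, h2⟩
      have := hz _ j ⟨hj, rfl⟩
      rwa [heq0, ha1] at this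
    · rintro ⟨i, h0, hz, h1, h2⟩
      refine ⟨i, h0, fun φ j hjh => ?_, h1, h2⟩
      rw [← hjh.2, heq0, ha1]
      exact hz j hjh.1
  rw [hR]
  show (Heap.dom (vh c) = {evalT s e1} ∧ vh c (evalT s e1) = some (evalT s e2)) ↔ _
  constructor
  · rintro ⟨hd, hval⟩
    have ha : evalT s e1 ∈ Heap.dom (vh c) := by rw [hd]; rfl
    rw [hdom] at ha
    obtain ⟨h0, i, hi⟩ := ha
    refine ⟨i, hi ▸ h0, ?_, hi, ?_⟩
    · intro j hj
      by_contra hj0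
      have : (c j).1 ∈ Heap.dom (vh c) := (hdom _).2 ⟨hj0, j, rfl⟩
      rw [hd, Set.mem_singleton_iff] at this
      exact hj0 (hdef j i hj (this.trans hi.symm))
    · have := vh_eq c hdef i (hi ▸ h0)
      rw [hi, hval] at this
      exact (Option.some_inj.mp this).symm
  · rintro ⟨i, h0, hz, h1, h2⟩
    constructor
    · ext l
      rw [hdom, Set.mem_singleton_iff]
      constructor
      · rintro ⟨hl0, j, hj⟩
        have hji : j = i := by
          by_contra hji
          exact hl0 (hj ▸ hz j hji)
        rw [← hj, hji, h1]
      · rintro rfl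
        exact ⟨h1 ▸ h0, i, h1⟩
    · rw [← h1, vh_eq c hdef i h0, h2]
end

section
/- Correctness of f on separating conjunction, given correctness on subformulas: suppose for k = 1, 2 and all heaps I_h' ∈ I_h[n] with vh_n(c') = I_h', I_s,I_h' ⊨ φ_k iff I_s ∪ [C'⇐c'], ∅ ⊨ f(φ_k, C'). Then for any heap I_h ∈ I_h[n] with vh_n(c) = I_h, I_s,I_h ⊨ φ1 * φ2 iff I_s ∪ [C⇐c], ∅ satisfies ⋁_{c2 ∈ Val^{2n}} ⋁_{c1 ∈ Val^{2n}} (C = C' ⊛ C'' ∧ f(φ1, C') ∧ f(φ2, C''))[c1/C'][c2/C'']. -/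
/-- The vector decomposition formula C = C' ⊛ C''. -/
def decompV {n : ℕ} (c c' c'' : Fin n → Val × Val) : Prop :=
  ∀ i, ((c' i).1 = (c i).1 ∧ (c'' i).1 = 0 ∧ (c' i).2 = (c i).2) ∨
       ((c' i).1 = 0 ∧ (c'' i).1 = (c i).1 ∧ (c'' i).2 = (c i).2)

lemma vh_eq_some {n : ℕ} {c : Fin n → Val × Val} (hdef : vhDefined c) {i : Fin n}
    (h : (c i).1 ≠ 0) : vh c ((c i).1) = some ((c i).2) := by
  have hl : (c i).1 ≠ 0 ∧ ∃ j, (c j).1 = (c i).1 := ⟨h, i, rfl⟩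
  rw [vh, dif_pos hl]
  have hspec := hl.2.choose_spec
  by_cases hij : hl.2.choose = i
  · rw [hij]
  · exact absurd (hdef _ _ hij hspec) (by rw [hspec]; exact h)

lemma vh_eq_none {n : ℕ} {c : Fin n → Val × Val} {l : ℕ}
    (h : ¬ (l ≠ 0 ∧ ∃ i, (c i).1 = l)) : vh c l = none := by
  rw [vh, dif_neg h]

lemma vh_exists {n : ℕ} {c : Fin n → Val × Val} {l : ℕ}
    (h : vh c l ≠ none) : l ≠ 0 ∧ ∃ i, (c i).1 = l := by
  by_contra hc
  exact h (vh_eq_none hc)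

/-- correctness of f on separating conjunction, assuming
    correctness on the subformulas.  F1 (resp. F2) is the meaning of the pure
    formula f(φ1, C') (resp. f(φ2, C'')) as a predicate on the values assigned
    to the fresh vector; the disjunction over all value vectors becomes an
    existential over value vectors. -/
theorem stmt_14 (n : ℕ) (s : Stack) (φ1 φ2 : SL)
    (c : Fin n → Val × Val) (hdef : vhDefined c)
    (F1 F2 : (Fin n → Val × Val) → Prop)
    (h1 : ∀ c' : Fin n → Val × Val, vhDefined c' → (sat s (vh c') φ1 ↔ F1 c'))
    (h2 : ∀ c' : Fin n → Val × Val, vhDefined c' → (sat s (vh c') φ2 ↔ F2 c')) :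
    sat s (vh c) (.sep φ1 φ2) ↔
      ∃ c1 c2 : Fin n → Val × Val, decompV c c1 c2 ∧ F1 c1 ∧ F2 c2 := by
  classical
  constructor
  · rintro ⟨ha, hb, hdisj, huni, hs1, hs2⟩
    set c1 : Fin n → Val × Val := fun i => if ha (c i).1 = none then (0, (c i).2) else c i with hc1
    set c2 : Fin n → Val × Val := fun i => if ha (c i).1 = none then c i else (0, (c i).2) with hc2
    -- first components of c1, c2 are either those of c, or 0
    have hopt1 : ∀ i, (c1 i).1 = (c i).1 ∨ (c1 i).1 = 0 := by
      intro i; by_cases h : ha (c i).1 = none <;> simp [hc1, h]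
    have hopt2 : ∀ i, (c2 i).1 = (c i).1 ∨ (c2 i).1 = 0 := by
      intro i; by_cases h : ha (c i).1 = none <;> simp [hc2, h]
    have hdef1 : vhDefined c1 := by
      intro i j hij heq
      by_contra hne
      rcases hopt1 i with hi | hi
      · rcases hopt1 j with hj | hj
        · exact hne (hi ▸ hdef i j hij (by rw [← hi, ← hj, heq]))
        · exact hne (heq.trans hj)
      · exact hne hi
    have hdef2 : vhDefined c2 := by
      intro i j hij heq
      by_contra hne
      rcases hopt2 i with hi | hi
      · rcases hopt2 j with hj | hj
        · exact hne (hi ▸ hdef i j hij (by rw [← hi, ← hj, heq]))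
        · exact hne (heq.trans hj)
      · exact hne hi
    have huni' : ∀ l, (ha l).orElse (fun _ => hb l) = vh c l := fun l => congrFun huni l
    have hzero1 : ha 0 = none := by
      have := huni' 0
      rw [vh_eq_none (by simp)] at this
      cases h : ha 0 <;> simp [h] at this ⊢
    have hzero2 : hb 0 = none := by
      have := huni' 0
      rw [vh_eq_none (by simp)] at this
      cases h : ha 0 <;> simp [h] at this
      exact this
    have heq1 : vh c1 = ha := by
      funext l
      by_cases hl : vh c1 l = none
      · rw [hl]
        by_contra hne
        have hne' : ha l ≠ none := fun h => hne h.symm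
        have hvl : vh c l ≠ none := by
          rw [← huni' l]
          cases h : ha l
          · exact absurd h hne'
          · simp [h]
        obtain ⟨hl0, i, hi⟩ := vh_exists hvl
        have hci : (c1 i).1 = l := by
          simp only [hc1]
          rw [if_neg (hi ▸ hne')]
          exact hi
        have : vh c1 l ≠ none := by
          rw [← hci]
          rw [vh_eq_some hdef1 (hci ▸ hl0)]
          simp
        exact this hl
      · obtain ⟨hl0, i, hi⟩ := vh_exists hl
        have hnone : ¬ ha (c i).1 = none := by
          by_contra h
          simp only [hc1, if_pos h] at hi
          exact hl0 (hi.symm ▸ rfl)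
        have hceq : c1 i = c i := by simp only [hc1, if_neg hnone]
        have hcil : (c i).1 = l := by rw [← hceq, hi]
        have h1v : vh c1 l = some ((c i).2) := by
          rw [← hi, vh_eq_some hdef1 (hi ▸ hl0), hceq]
        have hcv : vh c l = some ((c i).2) := by
          rw [← hcil]; exact vh_eq_some hdef (hcil ▸ hl0)
        rw [h1v]
        have := huni' l
        rw [hcv] at this
        cases h : ha l
        · exact absurd (hcil ▸ h) hnone
        · simp [h] at this; rw [this]
    have heq2 : vh c2 = hb := by
      funext l
      by_cases hl : vh c2 l = none
      · rw [hl]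
        by_contra hne
        have hne' : hb l ≠ none := fun h => hne h.symm
        have hanone : ha l = none := (hdisj l).resolve_right hne'
        have hvl : vh c l ≠ none := by
          rw [← huni' l, hanone]
          simpa using hne'
        obtain ⟨hl0, i, hi⟩ := vh_exists hvl
        have hci : (c2 i).1 = l := by
          simp only [hc2]
          rw [if_pos (hi ▸ hanone)]
          exact hi
        have : vh c2 l ≠ none := by
          rw [← hci, vh_eq_some hdef2 (hci ▸ hl0)]
          simp
        exact this hl
      · obtain ⟨hl0, i, hi⟩ := vh_exists hl
        have hnone : ha (c i).1 = none := by
          by_contra h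
          simp only [hc2, if_neg h] at hi
          exact hl0 (hi.symm ▸ rfl)
        have hceq : c2 i = c i := by simp only [hc2, if_pos hnone]
        have hcil : (c i).1 = l := by rw [← hceq, hi]
        have h2v : vh c2 l = some ((c i).2) := by
          rw [← hi, vh_eq_some hdef2 (hi ▸ hl0), hceq]
        have hcv : vh c l = some ((c i).2) := by
          rw [← hcil]; exact vh_eq_some hdef (hcil ▸ hl0)
        rw [h2v]
        have := huni' l
        rw [hcil] at hnone
        rw [hcv, hnone] at this
        simpa using this.symm
    have hdec : decompV c c1 c2 := by
      intro i
      by_cases h : ha (c i).1 = none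
      · right; simp [hc1, hc2, h]
      · left; simp [hc1, hc2, h]
    exact ⟨c1, c2, hdec, (h1 c1 hdef1).mp (heq1 ▸ hs1), (h2 c2 hdef2).mp (heq2 ▸ hs2)⟩
  · rintro ⟨c1, c2, hdec, hF1, hF2⟩
    have hopt1 : ∀ i, (c1 i).1 = (c i).1 ∨ (c1 i).1 = 0 := fun i =>
      (hdec i).elim (fun h => Or.inl h.1) (fun h => Or.inr h.1)
    have hopt2 : ∀ i, (c2 i).1 = (c i).1 ∨ (c2 i).1 = 0 := fun i =>
      (hdec i).elim (fun h => Or.inr h.2.1) (fun h => Or.inl h.2.1)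
    have hdef1 : vhDefined c1 := by
      intro i j hij heq
      by_contra hne
      rcases hopt1 i with hi | hi
      · rcases hopt1 j with hj | hj
        · exact hne (hi ▸ hdef i j hij (by rw [← hi, ← hj, heq]))
        · exact hne (heq.trans hj)
      · exact hne hi
    have hdef2 : vhDefined c2 := by
      intro i j hij heq
      by_contra hne
      rcases hopt2 i with hi | hi
      · rcases hopt2 j with hj | hj
        · exact hne (hi ▸ hdef i j hij (by rw [← hi, ← hj, heq]))
        · exact hne (heq.trans hj)
      · exact hne hi
    have hdisj : Heap.Disj (vh c1) (vh c2) := by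
      intro l
      by_contra hc
      push_neg at hc
      obtain ⟨hl0, i, hi⟩ := vh_exists hc.1
      obtain ⟨_, j, hj⟩ := vh_exists hc.2
      have hci : (c i).1 = l := ((hopt1 i).resolve_right (hi ▸ hl0)).symm.trans hi
      have hcj : (c j).1 = l := ((hopt2 j).resolve_right (hj ▸ hl0)).symm.trans hj
      by_cases hij : i = j
      · subst hij
        rcases hdec i with h | h
        · exact hl0 (hj ▸ h.2.1)
        · exact hl0 (hi ▸ h.1)
      · exact hl0 (hci ▸ hdef i j hij (hci.trans hcj.symm))
    have huni : Heap.union (vh c1) (vh c2) = vh c := by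
      funext l
      unfold Heap.union
      by_cases hl : vh c1 l = none
      · rw [hl]
        show vh c2 l = vh c l
        by_cases hl2 : vh c l = none
        · rw [hl2]
          apply vh_eq_none
          rintro ⟨hl0, i, hi⟩
          have hci : (c i).1 = l := ((hopt2 i).resolve_right (hi ▸ hl0)).symm.trans hi
          have hvc : vh c l = some ((c i).2) := by
            rw [← hci]; exact vh_eq_some hdef (hci ▸ hl0)
          rw [hl2] at hvc; exact Option.some_ne_none _ hvc.symm
        · obtain ⟨hl0, i, hi⟩ := vh_exists hl2
          have hcv : vh c l = some ((c i).2) := by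
            rw [← hi]; exact vh_eq_some hdef (hi ▸ hl0)
          rcases hdec i with h | h
          · exfalso
            have h1i : (c1 i).1 = l := h.1.trans hi
            have hv1 := vh_eq_some hdef1 (show (c1 i).1 ≠ 0 by rw [h1i]; exact hl0)
            rw [h1i, hl] at hv1
            exact Option.some_ne_none _ hv1.symm
          · have h2i : (c2 i).1 = l := h.2.1.trans hi
            have hv2 : vh c2 l = some ((c i).2) := by
              rw [← h2i, vh_eq_some hdef2 (show (c2 i).1 ≠ 0 by rw [h2i]; exact hl0), h.2.2]
            rw [hv2, hcv]
      · obtain ⟨hl0, i, hi⟩ := vh_exists hl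
        have hci : (c i).1 = l := ((hopt1 i).resolve_right (hi ▸ hl0)).symm.trans hi
        have h12 : (c1 i).2 = (c i).2 := by
          rcases hdec i with h | h
          · exact h.2.2
          · exact absurd (h.1.symm.trans hi) (Ne.symm hl0)
        have h1v : vh c1 l = some ((c i).2) := by
          rw [← hi, vh_eq_some hdef1 (hi ▸ hl0), h12]
        have hcv : vh c l = some ((c i).2) := by
          rw [← hci]; exact vh_eq_some hdef (hci ▸ hl0)
        rw [h1v, hcv]
        rfl
    exact ⟨vh c1, vh c2, hdisj, huni, (h1 c1 hdef1).mpr hF1, (h2 c2 hdef2).mpr hF2⟩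
end
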